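/- The set of a ∈ ℂ for which the polynomial g_{2,a}(t,x) is not irreducible in the polynomial ring ℂ[t,x] is finite; in particular, for all but finitely many a ∈ ℂ the conic g_{2,a} = 0 is reduced and irreducible. -/

import Mathlib

/-!
Seen as a polynomial in `x` over `ℂ[t]`, `-g_{2,a}` is a monic quadratic, so by Gauss's lemma
over the integrally closed domain `ℂ[t]` it can only factor if its discriminant `Δ_a(t)` is a
square in `ℂ[t]`. Now `Δ_a` is a quadratic in `t` with leading coefficient `-(8/5)(2a² + 25)`,
and a quadratic with nonzero leading coefficient is a square only if its own discriminant,
here `-(8/5)(a² + 10)(a⁴ - 26a² - 200)`, vanishes. So every reducible `g_{2,a}` has `a` among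
the roots of a fixed nonzero polynomial.
-/

open MvPolynomial

/-- The conic `g_{2,a}(t,x) = (1/10)a²t² − 10t² − (12/5)√−10·a·t + 2a² − (3/5)√−10·a·x·t
 + a²x + 4 + 2x − x²` (`√−10 = i√10`), as an element of `ℂ[t,x]`; here `t = X 0`, `x = X 1`. -/
noncomputable def g2 (a : ℂ) : MvPolynomial (Fin 2) ℂ :=
  C (1 / 10 * a ^ 2) * X 0 ^ 2 - C 10 * X 0 ^ 2
    - C (12 / 5 * (Complex.I * (Real.sqrt 10 : ℂ)) * a) * X 0 + C (2 * a ^ 2)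
    - C (3 / 5 * (Complex.I * (Real.sqrt 10 : ℂ)) * a) * X 1 * X 0
    + C (a ^ 2) * X 1 + C 4 + C 2 * X 1 - X 1 ^ 2

theorem irreducible_neg_iff {R : Type*} [Ring R] {p : R} :
    Irreducible (-p) ↔ Irreducible p :=
  (Associated.refl p).neg_left.irreducible_iff

theorem IsIntegrallyClosed.isSquare_of_isSquare_algebraMap {R K : Type*} [CommRing R]
    [IsIntegrallyClosed R] [CommRing K] [Algebra R K] [IsFractionRing R K] {r : R}
    (h : IsSquare (algebraMap R K r)) : IsSquare r := by
  obtain ⟨s, hs⟩ := h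
  have hint : IsIntegral R s :=
    ⟨Polynomial.X ^ 2 - Polynomial.C r, Polynomial.monic_X_pow_sub_C r two_ne_zero, by
      simp [hs, sq]⟩
  obtain ⟨e, rfl⟩ := IsIntegrallyClosed.isIntegral_iff.mp hint
  exact ⟨e, IsFractionRing.injective R K (by rw [hs, map_mul])⟩

namespace Polynomial

theorem irreducible_X_sq_add_of_not_isSquare_discrim {R : Type*} [CommRing R] [IsDomain R]
    [IsIntegrallyClosed R] {b c : R} (h : ¬ IsSquare (discrim 1 b c)) :
    Irreducible (X ^ 2 + C b * X + C c) := by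
  have hmonic : (X ^ 2 + C b * X + C c).Monic := by monicity!
  have hdeg : (X ^ 2 + C b * X + C c).natDegree = 2 := by compute_degree!
  rw [hmonic.irreducible_iff_irreducible_map_fraction_map (K := FractionRing R)]
  by_contra hirr
  obtain ⟨c₁, c₂, hc, hb⟩ := ((hmonic.map _).not_irreducible_iff_exists_add_mul_eq_coeff
    ((hmonic.natDegree_map _).trans hdeg)).mp hirr
  simp only [coeff_map, coeff_add, coeff_C_mul, coeff_X_pow, coeff_X_zero, coeff_X_one,
    coeff_C_zero, coeff_C_of_ne_zero one_ne_zero, OfNat.zero_ne_ofNat, OfNat.one_ne_ofNat,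
    if_false, zero_add, mul_zero, mul_one, add_zero] at hc hb
  refine h (IsIntegrallyClosed.isSquare_of_isSquare_algebraMap (K := FractionRing R)
    ⟨c₁ - c₂, ?_⟩)
  simp only [discrim, map_sub, map_mul, map_pow, map_one, map_ofNat]
  linear_combination (algebraMap R _ b + c₁ + c₂) * hb - 4 * hc

theorem discrim_eq_zero_of_isSquare {R : Type*} [CommRing R] [IsDomain R] {a b c : R}
    (ha : a ≠ 0) (h : IsSquare (C a * X ^ 2 + C b * X + C c)) : discrim a b c = 0 := by
  obtain ⟨e, he⟩ := h
  have hdeg : e.natDegree = 1 := by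
    have := congrArg natDegree he
    have he0 : e ≠ 0 := by rintro rfl; simp [natDegree_quadratic ha] at this
    rw [natDegree_quadratic ha, natDegree_mul he0 he0] at this
    omega
  set u := e.coeff 1
  set v := e.coeff 0
  have hsq : e * e = C (u * u) * X ^ 2 + C (2 * u * v) * X + C (v * v) := by
    rw [eq_X_add_C_of_natDegree_le_one hdeg.le]
    simp only [map_mul, map_ofNat]
    ring
  rw [hsq] at he
  have h2 := congrArg (coeff · 2) he
  have h1 := congrArg (coeff · 1) he
  have h0 := congrArg (coeff · 0) he
  simp only [coeff_add, coeff_C_mul_X_pow, coeff_C_mul_X, coeff_C] at h2 h1 h0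
  norm_num at h2 h1 h0
  rw [discrim, h2, h1, h0]
  ring

end Polynomial

open scoped Polynomial
open Polynomial.Bivariate

local notation "√-10" => Complex.I * (Real.sqrt 10 : ℂ)

theorem sq_I_mul_sqrt_ten : (√-10) ^ 2 = -10 := by
  rw [mul_pow, Complex.I_sq, ← Complex.ofReal_pow, Real.sq_sqrt (by norm_num)]
  norm_num

noncomputable def g2LinearCoeff (a : ℂ) : ℂ[X] :=
  Polynomial.C (3 / 5 * √-10 * a) * Polynomial.X + Polynomial.C (-(a ^ 2 + 2))

noncomputable def g2ConstCoeff (a : ℂ) : ℂ[X] :=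
  Polynomial.C (10 - 1 / 10 * a ^ 2) * Polynomial.X ^ 2
    + Polynomial.C (12 / 5 * √-10 * a) * Polynomial.X + Polynomial.C (-(2 * a ^ 2 + 4))

-- `equivMvPolynomial` sends the inner variable `C X` to `X 0 = t` and `Y` to `X 1 = x`.
theorem g2_eq_equivMvPolynomial (a : ℂ) :
    g2 a = equivMvPolynomial ℂ
      (-(Y ^ 2 + Polynomial.C (g2LinearCoeff a) * Y + Polynomial.C (g2ConstCoeff a))) := by
  simp only [g2, g2LinearCoeff, g2ConstCoeff, map_neg, map_add, map_sub, map_mul, map_pow,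
    map_ofNat, equivMvPolynomial_X, equivMvPolynomial_C_X, equivMvPolynomial_C_C]
  ring

theorem discrim_g2Coeffs (a : ℂ) :
    discrim 1 (g2LinearCoeff a) (g2ConstCoeff a) =
      Polynomial.C (-8 / 5 * (2 * a ^ 2 + 25)) * Polynomial.X ^ 2
        + Polynomial.C (-(6 / 5) * √-10 * a * (a ^ 2 + 10)) * Polynomial.X
        + Polynomial.C ((a ^ 2 + 2) * (a ^ 2 + 10)) := by
  have expand (u v p q r : ℂ) :
      discrim 1 (Polynomial.C u * Polynomial.X + Polynomial.C v)
        (Polynomial.C p * Polynomial.X ^ 2 + Polynomial.C q * Polynomial.X + Polynomial.C r) =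
      Polynomial.C (u ^ 2 - 4 * p) * Polynomial.X ^ 2
        + Polynomial.C (2 * u * v - 4 * q) * Polynomial.X + Polynomial.C (v ^ 2 - 4 * r) := by
    simp only [discrim, map_sub, map_mul, map_pow, map_ofNat]
    ring
  rw [g2LinearCoeff, g2ConstCoeff, expand]
  congrm Polynomial.C ?_ * _ + Polynomial.C ?_ * _ + Polynomial.C ?_
  · linear_combination (9 / 25 * a ^ 2) * sq_I_mul_sqrt_ten
  · ring
  · ring

theorem discrim_coeffs_discrim_g2Coeffs (a : ℂ) :
    discrim (-8 / 5 * (2 * a ^ 2 + 25)) (-(6 / 5) * √-10 * a * (a ^ 2 + 10))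
      ((a ^ 2 + 2) * (a ^ 2 + 10)) = -8 / 5 * ((a ^ 2 + 10) * (a ^ 4 - 26 * a ^ 2 - 200)) := by
  rw [discrim]
  linear_combination (36 / 25 * a ^ 2 * (a ^ 2 + 10) ^ 2) * sq_I_mul_sqrt_ten

theorem irreducible_g2 {a : ℂ}
    (h : (2 * a ^ 2 + 25) * ((a ^ 2 + 10) * (a ^ 4 - 26 * a ^ 2 - 200)) ≠ 0) :
    Irreducible (g2 a) := by
  rw [g2_eq_equivMvPolynomial, MulEquiv.irreducible_iff, irreducible_neg_iff]
  apply Polynomial.irreducible_X_sq_add_of_not_isSquare_discrim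
  rw [discrim_g2Coeffs]
  intro hsq
  have hlead : -8 / 5 * (2 * a ^ 2 + 25) ≠ 0 := mul_ne_zero (by norm_num) (left_ne_zero_of_mul h)
  have hzero := Polynomial.discrim_eq_zero_of_isSquare hlead hsq
  rw [discrim_coeffs_discrim_g2Coeffs] at hzero
  exact right_ne_zero_of_mul h (by linear_combination (-5 / 8) * hzero)

/-- The set of `a ∈ ℂ` for which `g_{2,a}(t,x)` is not irreducible in `ℂ[t,x]` is finite;
in particular, for all but finitely many `a ∈ ℂ` the conic `g_{2,a} = 0` is reduced and
irreducible. -/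
theorem finite_not_irreducible_g2 : {a : ℂ | ¬ Irreducible (g2 a)}.Finite := by
  let P : ℂ[X] := (2 * Polynomial.X ^ 2 + 25) *
    ((Polynomial.X ^ 2 + 10) * (Polynomial.X ^ 4 - 26 * Polynomial.X ^ 2 - 200))
  have hP : P ≠ 0 := fun h => by simpa [P] using congrArg (Polynomial.eval 0) h
  refine (Polynomial.finite_setOfPred_isRoot hP).subset fun a ha => ?_
  by_contra hroot
  exact ha (irreducible_g2 (by simpa [P] using hroot))
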